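/- Bound on individual Taylor terms of the CSI ratio: if |c_l| = 1 for every l ∈ Fin L, then for every k ≥ 1, every tuple (l₁,…,l_k) ∈ (Fin L)^k, every z ∈ ℂ^L with D(z) ≠ 0, every R ≥ 0, and every family of complex increments w₁,…,w_k with |w_i| ≤ R for all i, one has |(1/k!) · ∂^k f / ∂z_{l₁}⋯∂z_{l_k}(z) · ∏_{i=1}^{k} w_i| ≤ ((|N(z)| + |D(z)|)/|D(z)|) · (R / |D(z)|)^k. -/

import Mathlib

open scoped BigOperators

/-- Numerator `N(z) = A + Σ_l z_l` of the CSI ratio. -/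
noncomputable def Nfun (L : ℕ) (A : ℂ) (z : Fin L → ℂ) : ℂ := A + ∑ l, z l

/-- Denominator `D(z) = B + Σ_l c_l z_l` of the CSI ratio. -/
noncomputable def Dfun (L : ℕ) (B : ℂ) (c : Fin L → ℂ) (z : Fin L → ℂ) : ℂ :=
  B + ∑ l, c l * z l

/-- The CSI ratio `f(z) = N(z)/D(z)`. -/
noncomputable def ffun (L : ℕ) (A B : ℂ) (c : Fin L → ℂ) (z : Fin L → ℂ) : ℂ :=
  Nfun L A z / Dfun L B c z

/-!
`N` and `D` are affine with linear parts `α` and `β`, so differentiating `(a N + b D) / D ^ (q + 1)`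
along `v` gives a function of the same shape with `q + 1` and coefficients
`a' = -(q + 1) β(v) a`, `b' = a α(v) - q β(v) b`. Starting from `N / D` (`a = 1`, `b = 0`, `q = 0`)
and differentiating along directions with `‖α v‖, ‖β v‖ ≤ 1`, the bounds `‖a‖, ‖b‖ ≤ q!` persist,
since `(q + 1) q! = q! + q q! = (q + 1)!`. Hence the `k`-th derivative of `N / D` along such
directions is at most `k! (‖N‖ + ‖D‖) / ‖D‖ ^ (k + 1)`; the coordinate directions `e_l` qualify
because `α e_l = 1` and `β e_l = c_l`.
-/

open scoped Nat ContDiff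

section AffineRatio

variable {E : Type*} [NormedAddCommGroup E] [NormedSpace ℂ E] {N D : E → ℂ} {α β : E →L[ℂ] ℂ}

theorem contDiff_of_forall_hasFDerivAt {f : E → ℂ} {f' : E →L[ℂ] ℂ}
    (hf : ∀ x, HasFDerivAt f f' x) : ContDiff ℂ ∞ f := by
  rw [contDiff_infty_iff_fderiv]
  refine ⟨fun x => (hf x).differentiableAt, ?_⟩
  rw [funext fun x => (hf x).fderiv]
  exact contDiff_const

theorem fderiv_comb_div_pow_apply (hN : ∀ x, HasFDerivAt N α x) (hD : ∀ x, HasFDerivAt D β x)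
    (a b : ℂ) (q : ℕ) {x : E} (hx : D x ≠ 0) (v : E) :
    fderiv ℂ (fun y => (a * N y + b * D y) / D y ^ (q + 1)) x v =
      (-((q + 1) * β v * a) * N x + (a * α v - q * β v * b) * D x) / D x ^ (q + 2) := by
  have hnum : HasFDerivAt (fun y => a * N y + b * D y) _ x :=
    ((hN x).const_mul a).add ((hD x).const_mul b)
  have hden : HasFDerivAt (fun y => (D y ^ (q + 1))⁻¹) _ x :=
    (hasDerivAt_inv (pow_ne_zero (q + 1) hx)).comp_hasFDerivAt x ((hD x).pow (q + 1))
  simp only [div_eq_mul_inv]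
  rw [(hnum.fun_mul hden).fderiv]
  simp only [add_tsub_cancel_right, nsmul_eq_mul, Nat.cast_add, Nat.cast_one, smul_add,
    add_apply, smul_apply, smul_eq_mul, neg_mul, mul_neg]
  field_simp
  ring

theorem exists_iteratedFDeriv_div_eq (hN : ∀ x, HasFDerivAt N α x)
    (hD : ∀ x, HasFDerivAt D β x) :
    ∀ (k : ℕ) (v : Fin k → E), (∀ i, ‖α (v i)‖ ≤ 1) → (∀ i, ‖β (v i)‖ ≤ 1) →
      ∃ a b : ℂ, ‖a‖ ≤ k ! ∧ ‖b‖ ≤ k ! ∧ ∀ x, D x ≠ 0 →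
        iteratedFDeriv ℂ k (fun y => N y / D y) x v = (a * N x + b * D x) / D x ^ (k + 1)
  | 0, v, _, _ => ⟨1, 0, by simp, by simp, fun x _ => by simp⟩
  | k + 1, v, hα, hβ => by
    obtain ⟨a, b, ha, hb, heq⟩ :=
      exists_iteratedFDeriv_div_eq hN hD k (Fin.tail v) (fun i => hα _) (fun i => hβ _)
    refine ⟨-((k + 1) * β (v 0) * a), a * α (v 0) - k * β (v 0) * b, ?_, ?_, fun x hx => ?_⟩
    · calc ‖-((k + 1) * β (v 0) * a)‖ = (k + 1) * ‖β (v 0)‖ * ‖a‖ := by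
            rw [norm_neg, norm_mul, norm_mul, ← Nat.cast_succ, Complex.norm_natCast]; push_cast; rfl
        _ ≤ (k + 1) * 1 * k ! := by gcongr; exact hβ 0
        _ = (k + 1)! := by push_cast [Nat.factorial_succ]; ring
    · calc ‖a * α (v 0) - k * β (v 0) * b‖ ≤ ‖a‖ * ‖α (v 0)‖ + k * ‖β (v 0)‖ * ‖b‖ := by
            refine (norm_sub_le _ _).trans_eq ?_
            rw [norm_mul, norm_mul, norm_mul, Complex.norm_natCast]
        _ ≤ k ! * 1 + k * 1 * k ! := by gcongr; exacts [hα 0, hβ 0]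
        _ = (k + 1)! := by push_cast [Nat.factorial_succ]; ring
    · have hsmooth : ContDiffAt ℂ ∞ (fun y => N y / D y) x :=
        (contDiff_of_forall_hasFDerivAt hN).contDiffAt.div
          (contDiff_of_forall_hasFDerivAt hD).contDiffAt hx
      have hnear : (fun y => iteratedFDeriv ℂ k (fun y => N y / D y) y (Fin.tail v)) =ᶠ[nhds x]
          fun y => (a * N y + b * D y) / D y ^ (k + 1) := by
        filter_upwards [(hD x).continuousAt.eventually_ne hx] with y hy using heq y hy
      rw [(hsmooth.differentiableAt_iteratedFDeriv
          (by exact_mod_cast ENat.natCast_lt_top k)).iteratedFDeriv_succ_apply_left',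
        hnear.fderiv_eq, fderiv_comb_div_pow_apply hN hD a b k hx]

theorem norm_iteratedFDeriv_div_apply_le (hN : ∀ x, HasFDerivAt N α x)
    (hD : ∀ x, HasFDerivAt D β x) {k : ℕ} {v : Fin k → E} (hα : ∀ i, ‖α (v i)‖ ≤ 1)
    (hβ : ∀ i, ‖β (v i)‖ ≤ 1) {x : E} (hx : D x ≠ 0) :
    ‖iteratedFDeriv ℂ k (fun y => N y / D y) x v‖ ≤ k ! * (‖N x‖ + ‖D x‖) / ‖D x‖ ^ (k + 1) := by
  obtain ⟨a, b, ha, hb, heq⟩ := exists_iteratedFDeriv_div_eq hN hD k v hα hβ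
  rw [heq x hx, norm_div, norm_pow]
  gcongr
  calc ‖a * N x + b * D x‖ ≤ ‖a‖ * ‖N x‖ + ‖b‖ * ‖D x‖ := by
        rw [← norm_mul, ← norm_mul]; exact norm_add_le _ _
    _ ≤ k ! * (‖N x‖ + ‖D x‖) := by rw [mul_add]; gcongr

end AffineRatio

theorem hasFDerivAt_Nfun (L : ℕ) (A : ℂ) (z : Fin L → ℂ) :
    HasFDerivAt (Nfun L A) (∑ l, ContinuousLinearMap.proj l : (Fin L → ℂ) →L[ℂ] ℂ) z :=
  (HasFDerivAt.fun_sum fun l _ => hasFDerivAt_apply l z).const_add A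

theorem hasFDerivAt_Dfun (L : ℕ) (B : ℂ) (c : Fin L → ℂ) (z : Fin L → ℂ) :
    HasFDerivAt (Dfun L B c) (∑ l, c l • ContinuousLinearMap.proj l : (Fin L → ℂ) →L[ℂ] ℂ) z :=
  (HasFDerivAt.fun_sum fun l _ => (hasFDerivAt_apply l z).const_mul (c l)).const_add B

theorem csi_ratio_taylor_term_bound_general
    (L : ℕ) (A B : ℂ) (c : Fin L → ℂ)
    (hc : ∀ l, ‖c l‖ = 1)
    (k : ℕ) (l : Fin k → Fin L)
    (z : Fin L → ℂ) (hD : Dfun L B c z ≠ 0)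
    (R : ℝ) (w : Fin k → ℂ) (hw : ∀ i, ‖w i‖ ≤ R) :
    ‖(k.factorial : ℂ)⁻¹ *
        iteratedFDeriv ℂ k (ffun L A B c) z (fun i => Pi.single (l i) 1) *
        ∏ i, w i‖ ≤
      ((‖Nfun L A z‖ + ‖Dfun L B c z‖) / ‖Dfun L B c z‖) *
        (R / ‖Dfun L B c z‖) ^ k := by
  have hderiv := norm_iteratedFDeriv_div_apply_le (hasFDerivAt_Nfun L A) (hasFDerivAt_Dfun L B c)
    (v := fun i => Pi.single (l i) 1) (by simp) (by simp [Pi.single_apply, hc]) hD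
  have hprod : ‖∏ i, w i‖ ≤ R ^ k :=
    calc ‖∏ i, w i‖ = ∏ i, ‖w i‖ := norm_prod _ _
      _ ≤ ∏ _i : Fin k, R := Finset.prod_le_prod (fun i _ => norm_nonneg _) (fun i _ => hw i)
      _ = R ^ k := by simp
  rw [norm_mul, norm_mul, norm_inv, Complex.norm_natCast]
  calc (k ! : ℝ)⁻¹ * ‖iteratedFDeriv ℂ k (ffun L A B c) z (fun i => Pi.single (l i) 1)‖ *
        ‖∏ i, w i‖
      ≤ (k ! : ℝ)⁻¹ * (k ! * (‖Nfun L A z‖ + ‖Dfun L B c z‖) / ‖Dfun L B c z‖ ^ (k + 1)) *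
          R ^ k := by
        gcongr; exact hderiv
    _ = _ := by rw [div_pow, pow_succ]; field_simp

/-- Bound on individual Taylor terms of the CSI ratio: if `|c_l| = 1` for all `l`,
then for `k ≥ 1`, any tuple `(l₁,…,l_k)`, any `z` with `D(z) ≠ 0`, any `R ≥ 0` and
increments `w_i` with `|w_i| ≤ R`,
`|(1/k!) ∂^k f/∂z_{l₁}⋯∂z_{l_k}(z) ∏_i w_i| ≤ ((|N(z)|+|D(z)|)/|D(z)|) (R/|D(z)|)^k`. -/
theorem csi_ratio_taylor_term_bound
    (L : ℕ) (hL : 1 ≤ L) (A B : ℂ) (c : Fin L → ℂ)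
    (hc : ∀ l, ‖c l‖ = 1)
    (k : ℕ) (hk : 1 ≤ k) (l : Fin k → Fin L)
    (z : Fin L → ℂ) (hD : Dfun L B c z ≠ 0)
    (R : ℝ) (hR : 0 ≤ R) (w : Fin k → ℂ) (hw : ∀ i, ‖w i‖ ≤ R) :
    ‖(k.factorial : ℂ)⁻¹ *
        iteratedFDeriv ℂ k (ffun L A B c) z (fun i => Pi.single (l i) 1) *
        ∏ i, w i‖ ≤
      ((‖Nfun L A z‖ + ‖Dfun L B c z‖) / ‖Dfun L B c z‖) *
        (R / ‖Dfun L B c z‖) ^ k :=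
  csi_ratio_taylor_term_bound_general L A B c hc k l z hD R w hw
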